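/- Suppose every cyclic module over a commutative ring R has projective dimension at most 2. Then the global dimension of R is at most 2. -/

import Mathlib

/-- `projDimLE R n M` says the `R`-module `M` has projective dimension at most
`n`. -/
def projDimLE (R : Type) [CommRing R] :
    ℕ → (M : Type) → [AddCommGroup M] → [Module R M] → Prop
  | 0, M, _, _ => Module.Projective R M
  | n + 1, M, _, _ => ∃ (P : Type) (_ : AddCommGroup P) (_ : Module R P),
      Module.Projective R P ∧ ∃ f : P →ₗ[R] M, Function.Surjective f ∧
        projDimLE R n (LinearMap.ker f)

/-- The global dimension of `R` is at most `n` if every `R`-module has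
projective dimension at most `n`. -/
def globalDimLE (R : Type) [CommRing R] (n : ℕ) : Prop :=
  ∀ (M : Type) [AddCommGroup M] [Module R M], projDimLE R n M

/-!
Baer's criterion, read through the long exact `Ext` sequence of `0 → I → R → R ⧸ I → 0`, says
that `C` is injective as soon as `Ext¹(R ⧸ I, C) = 0` for every ideal `I`. Dimension shifting
along `0 → B → J → J ⧸ B → 0` with `J` injective upgrades this to: `inj.dim B ≤ n` as soon as
`Ext^{n+1}(R ⧸ I, B) = 0` for all `I`. So if every cyclic module has projective dimension `≤ n`,
every module has injective dimension `≤ n`, hence `Ext^{n+1}(M, -) = 0` and `pd M ≤ n` for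
every `M`.
-/

open CategoryTheory Abelian

universe u v

lemma CategoryTheory.ShortComplex.ShortExact.subsingleton_ext_X₃_of_injective_X₂ {C : Type*}
    [Category C] [Abelian C] [HasExt C] {S : ShortComplex C} (hS : S.ShortExact)
    [Injective S.X₂] (Y : C) (n : ℕ) [Subsingleton (Ext Y S.X₁ (n + 2))] :
    Subsingleton (Ext Y S.X₃ (n + 1)) := by
  refine subsingleton_of_forall_eq 0 fun x ↦ ?_
  obtain ⟨y, rfl⟩ := Ext.covariant_sequence_exact₃ Y hS x rfl (Subsingleton.elim _ _)
  rw [y.eq_zero_of_injective, Ext.zero_comp]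

namespace ModuleCat

variable {R : Type u} [Ring R]

lemma injective_of_forall_subsingleton_ext_one_quotient (C : ModuleCat.{u} R)
    (hC : ∀ I : Ideal R, Subsingleton (Ext (of R (R ⧸ I)) C 1)) : Injective C := by
  rw [← Module.injective_iff_injective_object]
  refine Module.Baer.injective fun I g ↦ ?_
  have hS := shortComplex_shortExact
    (ShortComplex.mk (ofHom I.subtype) (ofHom I.mkQ) (by ext; simp))
    (LinearMap.exact_subtype_mkQ I) I.injective_subtype I.mkQ_surjective
  obtain ⟨φ, hφ⟩ := Ext.contravariant_sequence_exact₁ hS _ (Ext.mk₀ (ofHom g))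
    (zero_add 1) (Subsingleton.elim _ _)
  obtain ⟨φ, rfl⟩ := Ext.homEquiv₀.symm.surjective φ
  have hφ' : ofHom I.subtype ≫ φ = ofHom g := Ext.homEquiv₀.symm.injective (by simpa using hφ)
  exact ⟨φ.hom, fun x hx ↦ congr(($hφ').hom ⟨x, hx⟩)⟩

lemma hasInjectiveDimensionLT_of_forall_subsingleton_ext_quotient (n : ℕ) (C : ModuleCat.{u} R)
    (hC : ∀ I : Ideal R, Subsingleton (Ext (of R (R ⧸ I)) C (n + 1))) :
    HasInjectiveDimensionLT C (n + 1) := by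
  induction n generalizing C with
  | zero =>
    rw [← injective_iff_hasInjectiveDimensionLT_one]
    exact C.injective_of_forall_subsingleton_ext_one_quotient hC
  | succ n ih =>
    let S := ShortComplex.mk (Injective.ι C) (Limits.cokernel.π _) (Limits.cokernel.condition _)
    have hS : S.ShortExact := { exact := ShortComplex.exact_cokernel _ }
    rw [← hS.hasInjectiveDimensionLT_X₃_iff n inferInstance]
    exact ih S.X₃ fun I ↦ have := hC I; hS.subsingleton_ext_X₃_of_injective_X₂ _ n

lemma hasProjectiveDimensionLT_of_forall_quotient (n : ℕ) (M : ModuleCat.{u} R)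
    (h : ∀ I : Ideal R, HasProjectiveDimensionLT (of R (R ⧸ I)) (n + 1)) :
    HasProjectiveDimensionLT M (n + 1) := by
  refine hasProjectiveDimensionLT_of_enoughInjectives M (n + 1) fun B ↦ ?_
  have := B.hasInjectiveDimensionLT_of_forall_subsingleton_ext_quotient n fun I ↦
    HasProjectiveDimensionLT.subsingleton _ (n + 1) (n + 1) le_rfl B
  exact HasInjectiveDimensionLT.subsingleton B (n + 1) (n + 1) le_rfl M

end ModuleCat

lemma LinearMap.hasProjectiveDimensionLT_succ_succ_iff_ker {R : Type u} [Ring R] [Small.{v} R]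
    {P M : Type v} [AddCommGroup P] [Module R P] [AddCommGroup M] [Module R M]
    [Module.Projective R P] (f : P →ₗ[R] M) (hf : Function.Surjective f) (n : ℕ) :
    HasProjectiveDimensionLT (ModuleCat.of R M) (n + 2) ↔
      HasProjectiveDimensionLT (ModuleCat.of R (ker f)) (n + 1) :=
  have : Projective (ModuleCat.of R P) := (IsProjective.iff_projective P).mp inferInstance
  (shortExact_shortComplexKer hf).hasProjectiveDimensionLT_X₃_iff n this

lemma projDimLE_iff_hasProjectiveDimensionLE {R : Type} [CommRing R] (n : ℕ) (M : Type)
    [AddCommGroup M] [Module R M] :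
    projDimLE R n M ↔ HasProjectiveDimensionLE (ModuleCat.of R M) n := by
  induction n generalizing M with
  | zero =>
    rw [HasProjectiveDimensionLE, ← projective_iff_hasProjectiveDimensionLT_one,
      ← IsProjective.iff_projective]
    rfl
  | succ n ih =>
    refine ⟨fun ⟨P, _, _, _, f, hf, hker⟩ ↦ ?_, fun h ↦ ?_⟩
    · exact (LinearMap.hasProjectiveDimensionLT_succ_succ_iff_ker f hf n).mpr ((ih _).mp hker)
    · let f : (M →₀ R) →ₗ[R] M := Finsupp.linearCombination R id
      have hf : Function.Surjective f := fun m ↦ ⟨Finsupp.single m 1, by simp [f]⟩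
      exact ⟨M →₀ R, _, _, inferInstance, f, hf,
        (ih _).mpr ((LinearMap.hasProjectiveDimensionLT_succ_succ_iff_ker f hf n).mp h)⟩

/-- Auslander's theorem, special case: if every cyclic module `R ⧸ I` over a
commutative ring `R` has projective dimension at most `2`, then the global
dimension of `R` is at most `2`. -/
theorem globalDim_le_two_of_cyclic (R : Type) [CommRing R]
    (hcyc : ∀ I : Ideal R, projDimLE R 2 (R ⧸ I)) :
    globalDimLE R 2 := by
  intro M _ _
  rw [projDimLE_iff_hasProjectiveDimensionLE]
  exact ModuleCat.hasProjectiveDimensionLT_of_forall_quotient 2 _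
    fun I ↦ (projDimLE_iff_hasProjectiveDimensionLE 2 _).mp (hcyc I)
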